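/- arXiv:1010.1989 — 4 statements merged into one kernel-verified Lean document; each statement's English description precedes it below -/
import Mathlib

section
/- For the n-qubit Pauli group, if S is a subset of vertices of a graph G such that every vertex of S has an even number of neighbors in S, then the product over v in S of the stabilizer generators X_v Z^{N_v} equals (-1)^{|E(S)|} X^S Z^{N(S)}, where E(S) is the edge set of the induced subgraph on S and Z^{N(S)} places Z on exactly those vertices having an odd number of neighbors in S. -/
open scoped Matrix

open scoped Classical in
/-- The number of edges of `G` inside the set `{v | x v = true}`. -/
noncomputable def edgeCountOn {V : Type*} [Fintype V] (G : SimpleGraph V) (x : V → Bool) : ℕ :=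
  (G.edgeFinset.filter fun e => ∀ v ∈ e, x v = true).card

open scoped Classical in
/-- The number of edges of the induced subgraph of `G` on `S`. -/
noncomputable def inducedEdgeCount {V : Type*} [Fintype V] (G : SimpleGraph V) (S : Finset V) : ℕ :=
  (G.edgeFinset.filter fun e => ∀ v ∈ e, v ∈ S).card

/-- The graph state of `G` in the computational basis: `ψ x = (-1)^{e(x)} / √(2^n)`.
It is the unique common `+1` eigenstate of the stabilizers `S_v = X_v Z^{N_v}`. -/
noncomputable def graphState {V : Type*} [Fintype V] (G : SimpleGraph V) :
    (V → Bool) → ℂ :=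
  fun x => (-1 : ℂ) ^ edgeCountOn G x / Real.sqrt (2 ^ Fintype.card V)

/-- The Pauli operator `X^S`, acting as `X` on every qubit in `S`. -/
noncomputable def XOp {V : Type*} [Fintype V] [DecidableEq V] (S : Finset V) :
    Matrix (V → Bool) (V → Bool) ℂ :=
  fun x y => if y = fun v => xor (x v) (decide (v ∈ S)) then 1 else 0

/-- The Pauli operator `Z^T`, acting as `Z` on every qubit in `T`. -/
noncomputable def ZOp {V : Type*} [Fintype V] [DecidableEq V] (T : Finset V) :
    Matrix (V → Bool) (V → Bool) ℂ :=
  Matrix.diagonal fun x => (-1 : ℂ) ^ (T.filter fun v => x v = true).card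

/-- The stabilizer generator `S_v = X_v Z^{N_v}` of the graph state of `G`. -/
noncomputable def stab {V : Type*} [Fintype V] [DecidableEq V] (G : SimpleGraph V)
    [DecidableRel G.Adj] (v : V) : Matrix (V → Bool) (V → Bool) ℂ :=
  XOp {v} * ZOp (G.neighborFinset v)

/-- `N(S)`: the set of vertices having an odd number of neighbours in `S`. -/
def oddNeighborhood {V : Type*} [Fintype V] [DecidableEq V] (G : SimpleGraph V)
    [DecidableRel G.Adj] (S : Finset V) : Finset V :=
  Finset.univ.filter fun u => Odd ((G.neighborFinset u).filter fun w => w ∈ S).card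

/-! Write every operator in the normal form `X^A Z^B`. Since `Z^B X^C = (-1)^{|B ∩ C|} X^C Z^B`,
the product of `X^A Z^B` and `X^C Z^D` is `(-1)^{|B ∩ C|} X^{A ∆ C} Z^{B ∆ D}`. Multiplying the
product over `S` by `S_a = X_a Z^{N_a}` for a new vertex `a` therefore contributes the sign
`(-1)^{|N_a ∩ S|}`, the number of edges `a` adds to the induced subgraph, and replaces `N(S)` by
`N_a ∆ N(S)`, which is the odd neighbourhood of `S ∪ {a}`. -/

open Finset
open scoped symmDiff

namespace Finset

theorem prod_mul_prod_eq_prod_symmDiff {ι M : Type*} [DecidableEq ι] [CommMonoid M]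
    {f : ι → M} (hf : ∀ i, f i * f i = 1) (s t : Finset ι) :
    (∏ i ∈ s, f i) * ∏ i ∈ t, f i = ∏ i ∈ s ∆ t, f i :=
  calc (∏ i ∈ s, f i) * ∏ i ∈ t, f i = (∏ i ∈ s ∪ t, f i) * ∏ i ∈ s ∩ t, f i :=
        prod_union_inter.symm
    _ = (∏ i ∈ s ∆ t, f i) * ((∏ i ∈ s ∩ t, f i) * ∏ i ∈ s ∩ t, f i) := by
        rw [← sup_eq_union, ← symmDiff_sup_inf s t, sup_eq_union,
          prod_union (disjoint_symmDiff_inf s t), inf_eq_inter, mul_assoc]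
    _ = ∏ i ∈ s ∆ t, f i := by
        rw [← prod_mul_distrib, prod_eq_one fun i _ => hf i, mul_one]

end Finset

section Pauli

variable {V : Type*} [DecidableEq V]

def flipBits (A : Finset V) (x : V → Bool) : V → Bool :=
  fun v => xor (x v) (decide (v ∈ A))

theorem flipBits_flipBits (A C : Finset V) (x : V → Bool) :
    flipBits C (flipBits A x) = flipBits (A ∆ C) x := by
  funext v
  by_cases hA : v ∈ A <;> by_cases hC : v ∈ C <;> simp [flipBits, mem_symmDiff, hA, hC]

theorem flipBits_empty (x : V → Bool) : flipBits ∅ x = x := by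
  funext v
  simp [flipBits]

noncomputable def zPhase (B : Finset V) (x : V → Bool) : ℂ :=
  ∏ v ∈ B, if x v then -1 else 1

theorem zPhase_mul_zPhase (B D : Finset V) (x : V → Bool) :
    zPhase B x * zPhase D x = zPhase (B ∆ D) x :=
  prod_mul_prod_eq_prod_symmDiff (fun v => by split_ifs <;> norm_num) B D

theorem zPhase_flipBits (B C : Finset V) (x : V → Bool) :
    zPhase B (flipBits C x) = (-1) ^ #(B ∩ C) * zPhase B x := by
  have hsplit : ∀ v, (if flipBits C x v then (-1 : ℂ) else 1) =
      (if v ∈ C then -1 else 1) * if x v then -1 else 1 := fun v => by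
    by_cases hC : v ∈ C <;> cases hx : x v <;> simp [flipBits, hC, hx]
  rw [zPhase, zPhase, prod_congr rfl fun v _ => hsplit v, prod_mul_distrib, prod_ite_mem,
    prod_const]

variable [Fintype V]

theorem XOp_apply (A : Finset V) (x y : V → Bool) :
    XOp A x y = if y = flipBits A x then 1 else 0 :=
  rfl

theorem ZOp_eq_diagonal (B : Finset V) : ZOp B = Matrix.diagonal (zPhase B) := by
  rw [ZOp]
  congr 1
  funext x
  rw [zPhase, prod_ite, prod_const, prod_const, one_pow, mul_one]

theorem XOp_empty : XOp (∅ : Finset V) = 1 := by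
  ext x y
  simp [XOp_apply, flipBits_empty, Matrix.one_apply, eq_comm]

theorem ZOp_empty : ZOp (∅ : Finset V) = 1 := by
  simp [ZOp]

theorem XOp_mul_XOp (A C : Finset V) : XOp A * XOp C = XOp (A ∆ C) := by
  ext x y
  simp only [Matrix.mul_apply, XOp_apply, ite_mul, one_mul, zero_mul]
  rw [sum_ite_eq', if_pos (mem_univ _), flipBits_flipBits]

theorem ZOp_mul_ZOp (B D : Finset V) : ZOp B * ZOp D = ZOp (B ∆ D) := by
  simp only [ZOp_eq_diagonal, Matrix.diagonal_mul_diagonal, zPhase_mul_zPhase]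

theorem ZOp_mul_XOp (B C : Finset V) :
    ZOp B * XOp C = (-1 : ℂ) ^ #(B ∩ C) • (XOp C * ZOp B) := by
  ext x y
  rw [ZOp_eq_diagonal, Matrix.diagonal_mul, Matrix.smul_apply, Matrix.mul_diagonal, XOp_apply]
  split_ifs with hy
  · have hsq : ((-1 : ℂ) ^ #(B ∩ C)) * (-1) ^ #(B ∩ C) = 1 := by rw [← mul_pow]; simp
    rw [hy, zPhase_flipBits]
    linear_combination (-zPhase B x) * hsq
  · simp

theorem XOp_mul_ZOp_mul_XOp_mul_ZOp (A B C D : Finset V) :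
    XOp A * ZOp B * (XOp C * ZOp D) = (-1 : ℂ) ^ #(B ∩ C) • (XOp (A ∆ C) * ZOp (B ∆ D)) :=
  calc XOp A * ZOp B * (XOp C * ZOp D) = XOp A * (ZOp B * XOp C) * ZOp D := by
        simp only [mul_assoc]
    _ = (-1 : ℂ) ^ #(B ∩ C) • (XOp A * XOp C * (ZOp B * ZOp D)) := by
        rw [ZOp_mul_XOp]; simp only [Matrix.mul_smul, Matrix.smul_mul, mul_assoc]
    _ = (-1 : ℂ) ^ #(B ∩ C) • (XOp (A ∆ C) * ZOp (B ∆ D)) := by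
        rw [XOp_mul_XOp, ZOp_mul_ZOp]

end Pauli

section GraphState

variable {V : Type*} [Fintype V] (G : SimpleGraph V)

theorem inducedEdgeCount_empty : inducedEdgeCount G ∅ = 0 := by
  simp only [inducedEdgeCount, notMem_empty, imp_false, card_eq_zero, filter_eq_empty_iff]
  intro e _
  induction e with
  | _ u w => exact fun h => h u (Sym2.mem_mk_left u w)

variable [DecidableEq V] [DecidableRel G.Adj]

theorem oddNeighborhood_empty : oddNeighborhood G ∅ = ∅ := by
  simp [oddNeighborhood]

theorem oddNeighborhood_insert {a : V} {S : Finset V} (ha : a ∉ S) :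
    oddNeighborhood G (insert a S) = G.neighborFinset a ∆ oddNeighborhood G S := by
  ext u
  have hadj : a ∈ G.neighborFinset u ↔ u ∈ G.neighborFinset a := by simp [G.adj_comm]
  simp only [oddNeighborhood, filter_mem_eq_inter, mem_filter, mem_univ, true_and, mem_symmDiff,
    ← hadj]
  by_cases hau : a ∈ G.neighborFinset u
  · rw [inter_insert_of_mem hau, card_insert_of_notMem fun h => ha (mem_inter.1 h).2,
      Nat.odd_add_one]
    tauto
  · rw [inter_insert_of_notMem hau]
    tauto

-- Rewrites the classical decidability instances in `inducedEdgeCount` to the ambient ones.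
theorem inducedEdgeCount_eq_card_filter (S : Finset V) :
    inducedEdgeCount G S = #(G.edgeFinset.filter fun e => ∀ v ∈ e, v ∈ S) := by
  unfold inducedEdgeCount
  convert rfl

theorem inducedEdgeCount_insert {a : V} {S : Finset V} (ha : a ∉ S) :
    inducedEdgeCount G (insert a S) = inducedEdgeCount G S + #(G.neighborFinset a ∩ S) := by
  have hsplit : G.edgeFinset.filter (fun e => ∀ v ∈ e, v ∈ insert a S) =
      G.edgeFinset.filter (fun e => ∀ v ∈ e, v ∈ S) ∪
        (G.neighborFinset a ∩ S).map (Sym2.mkEmbedding a) := by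
    ext e
    induction e with
    | _ u w =>
      simp only [mem_union, mem_filter, mem_map, mem_inter, mem_insert, SimpleGraph.mem_edgeFinset,
        SimpleGraph.mem_edgeSet, SimpleGraph.mem_neighborFinset, Sym2.mem_iff, forall_eq_or_imp,
        forall_eq, Sym2.mkEmbedding_apply, Sym2.eq_iff]
      have hne : G.Adj u w → u ≠ w := G.ne_of_adj
      grind [G.adj_comm]
  have hdisj : Disjoint (G.edgeFinset.filter (fun e => ∀ v ∈ e, v ∈ S))
      ((G.neighborFinset a ∩ S).map (Sym2.mkEmbedding a)) := by
    refine disjoint_left.2 fun e he he' => ?_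
    obtain ⟨w, -, rfl⟩ := mem_map.1 he'
    exact ha ((mem_filter.1 he).2 a (Sym2.mem_mk_left a w))
  rw [inducedEdgeCount_eq_card_filter, inducedEdgeCount_eq_card_filter, hsplit,
    card_union_of_disjoint hdisj, card_map]

theorem stab_mul_XOp_mul_ZOp {a : V} {S : Finset V} (ha : a ∉ S) :
    stab G a * (XOp S * ZOp (oddNeighborhood G S)) =
      (-1 : ℂ) ^ #(G.neighborFinset a ∩ S) •
        (XOp (insert a S) * ZOp (oddNeighborhood G (insert a S))) := by
  rw [stab, XOp_mul_ZOp_mul_XOp_mul_ZOp, oddNeighborhood_insert G ha,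
    (disjoint_singleton_left.2 ha).symmDiff_eq_sup, sup_eq_union, insert_eq]

end GraphState

theorem prod_stabilizers_eq_general {V : Type*} [Fintype V] [DecidableEq V]
    (G : SimpleGraph V) [DecidableRel G.Adj] (S : Finset V)
    (hcomm : (S : Set V).Pairwise fun a b => Commute (stab G a) (stab G b)) :
    S.noncommProd (stab G) hcomm =
      ((-1 : ℂ) ^ inducedEdgeCount G S) • (XOp S * ZOp (oddNeighborhood G S)) := by
  induction S using Finset.induction_on with
  | empty =>
    rw [noncommProd_empty, inducedEdgeCount_empty, oddNeighborhood_empty, XOp_empty, ZOp_empty,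
      pow_zero, one_smul, one_mul]
  | insert a S ha ih =>
    rw [noncommProd_insert_of_notMem _ _ _ _ ha, ih (hcomm.mono (by simp)), Matrix.mul_smul,
      stab_mul_XOp_mul_ZOp G ha, smul_smul, ← pow_add, inducedEdgeCount_insert G ha]

/-- If every vertex of `S` has an even number of neighbours in `S`, then
`∏_{v ∈ S} X_v Z^{N_v} = (-1)^{|E(S)|} X^S Z^{N(S)}`. -/
theorem prod_stabilizers_eq {V : Type*} [Fintype V] [DecidableEq V]
    (G : SimpleGraph V) [DecidableRel G.Adj] (S : Finset V)
    (heven : ∀ v ∈ S, Even (((G.neighborFinset v).filter fun w => w ∈ S).card))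
    (hcomm : (S : Set V).Pairwise fun a b => Commute (stab G a) (stab G b)) :
    S.noncommProd (stab G) hcomm =
      ((-1 : ℂ) ^ inducedEdgeCount G S) • (XOp S * ZOp (oddNeighborhood G S)) :=
  prod_stabilizers_eq_general G S hcomm
end

section
/- Let |ψ'⟩ be a unit vector and let X'_u, Z'_u, X'_v, Z'_v and Z'_w (w in N_u ∪ N_v) be self-adjoint involutions acting on a tensor-product Hilbert space (operators indexed by distinct parties commute). Suppose S'_u|ψ'⟩ = S'_v|ψ'⟩ = |ψ'⟩ where S'_u = X'_u Z'^{N_u}, S'_v = X'_v Z'^{N_v}, and (u,v) is an edge. If X'_v Z'_v |ψ'⟩ = -Z'_v X'_v |ψ'⟩, then X'_u Z'_u |ψ'⟩ = -Z'_u X'_u |ψ'⟩. -/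
/-!
Write `Pᵤ = ∏_{w ∈ N(u)} Z'_w`, so that `Sᵤ = X'ᵤ Pᵤ`, and split `Pᵥ = Z'ᵤ Q` with
`Q = ∏_{w ∈ N(v) \ {u}} Z'_w`. The stabilizer conditions let one trade the local
observables on `ψ` for products of observables at other vertices: `X'ᵤ ψ = Pᵤ ψ` and
`Z'ᵤ ψ = X'ᵥ Q ψ`. Hence `X'ᵤ Z'ᵤ ψ = (X'ᵥ Q) Pᵤ ψ` and `Z'ᵤ X'ᵤ ψ = Pᵤ (X'ᵥ Q) ψ`.
Since `v ∈ N(u)`, the product `Pᵤ` contains `Z'ᵥ`, and everything else in `Pᵤ` and `X'ᵥ Q`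
commutes, so the anticommutation of `X'ᵥ` and `Z'ᵥ` on `ψ` becomes that of `Pᵤ` and `X'ᵥ Q`.
-/

section AnticommuteAt

variable {A M : Type*} [Monoid A] [AddGroup M] [DistribMulAction A M]

def AnticommuteAt (x y : A) (ψ : M) : Prop :=
  (x * y) • ψ = -((y * x) • ψ)

variable {x y p q : A} {ψ : M}

theorem AnticommuteAt.symm (h : AnticommuteAt x y ψ) : AnticommuteAt y x ψ := by
  rw [AnticommuteAt, h, neg_neg]

theorem AnticommuteAt.mul_mul (h : AnticommuteAt x y ψ) (hpx : Commute p x)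
    (hpy : Commute p y) (hqx : Commute q x) (hqy : Commute q y) (hpq : Commute p q) :
    AnticommuteAt (x * p) (y * q) ψ := by
  have hxy : x * p * (y * q) = p * q * (x * y) := by
    rw [hpy.mul_mul_mul_comm, ((hpx.mul_right hpy).mul_left (hqx.mul_right hqy)).eq]
  have hyx : y * q * (x * p) = p * q * (y * x) := by
    rw [hqx.mul_mul_mul_comm, hpq.eq, ((hqy.mul_right hqx).mul_left (hpy.mul_right hpx)).eq]
  rw [AnticommuteAt, hxy, hyx, mul_smul, h, smul_neg, ← mul_smul]

theorem anticommuteAt_of_stabilized {a b c s : A} (ha : a * a = 1) (hb : b * b = 1)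
    (hSa : (a * s) • ψ = ψ) (hSc : (c * (b * q)) • ψ = ψ) (hbs : Commute b s)
    (hbc : Commute b c) (hac : Commute a c) (haq : Commute a q)
    (hs : AnticommuteAt s (c * q) ψ) : AnticommuteAt a b ψ := by
  have ha_smul : a • ψ = s • ψ := by
    rw [← hSa, smul_smul, ← mul_assoc, ha, one_mul, hSa]
  have hb_smul : b • ψ = (c * q) • ψ := by
    rw [← hSc, smul_smul, ← mul_assoc, hbc.eq, mul_assoc, ← mul_assoc b, hb, one_mul, hSc]
  have hab : (a * b) • ψ = (c * q * s) • ψ := by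
    rw [mul_smul, hb_smul, smul_smul, (hac.mul_right haq).eq, mul_smul, ha_smul, smul_smul]
  have hba : (b * a) • ψ = (s * (c * q)) • ψ := by
    rw [mul_smul, ha_smul, smul_smul, hbs.eq, mul_smul, hb_smul, smul_smul]
  rw [AnticommuteAt, hab, hba, hs, neg_neg]

end AnticommuteAt

theorem Finset.noncommProd_commute_noncommProd {ι A : Type*} [Monoid A] (s t : Finset ι)
    (f : ι → A) (hf : Pairwise fun i j => Commute (f i) (f j)) (hs ht) :
    Commute (s.noncommProd f hs) (t.noncommProd f ht) :=
  noncommProd_commute _ _ _ _ fun j _ => (noncommProd_commute _ _ _ _ fun i _ =>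
    (eq_or_ne i j).elim (fun hij => hij ▸ Commute.refl _) fun hij => hf hij.symm).symm

theorem anticommute_propagates_general {V : Type*} [Fintype V]
    {H : Type*} [NormedAddCommGroup H] [InnerProductSpace ℂ H]
    (G : SimpleGraph V) [DecidableRel G.Adj]
    (X' Z' : V → (H →L[ℂ] H))
    (hX2 : ∀ w, X' w * X' w = 1) (hZ2 : ∀ w, Z' w * Z' w = 1)
    (hXX : ∀ a b, a ≠ b → Commute (X' a) (X' b))
    (hXZ : ∀ a b, a ≠ b → Commute (X' a) (Z' b))
    (hZZ : ∀ a b, a ≠ b → Commute (Z' a) (Z' b))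
    (u v : V) (huv : G.Adj u v) (ψ : H)
    (hSu : (X' u * (G.neighborFinset u).noncommProd Z'
      (fun a _ b _ hab => hZZ a b hab)) ψ = ψ)
    (hSv : (X' v * (G.neighborFinset v).noncommProd Z'
      (fun a _ b _ hab => hZZ a b hab)) ψ = ψ)
    (hv : (X' v * Z' v) ψ = -((Z' v * X' v) ψ)) :
    (X' u * Z' u) ψ = -((Z' u * X' u) ψ) := by
  classical
  set Pu := (G.neighborFinset u).noncommProd Z' (fun a _ b _ hab => hZZ a b hab)
  set R := ((G.neighborFinset u).erase v).noncommProd Z' (fun a _ b _ hab => hZZ a b hab)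
  set Q := ((G.neighborFinset v).erase u).noncommProd Z' (fun a _ b _ hab => hZZ a b hab)
  have hPu : Z' v * R = Pu :=
    Finset.mul_noncommProd_erase _ ((G.mem_neighborFinset u v).2 huv) Z' _
  have hPv : Z' u * Q = (G.neighborFinset v).noncommProd Z' (fun a _ b _ hab => hZZ a b hab) :=
    Finset.mul_noncommProd_erase _ ((G.mem_neighborFinset v u).2 huv.symm) Z' _
  rw [← hPv] at hSv
  have hR_ne {w} (hw : w ∈ (G.neighborFinset u).erase v) : v ≠ w :=
    (Finset.ne_of_mem_erase hw).symm
  have hQ_ne {w} (hw : w ∈ (G.neighborFinset v).erase u) : u ≠ w ∧ v ≠ w :=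
    ⟨(Finset.ne_of_mem_erase hw).symm,
      ((G.mem_neighborFinset v w).1 (Finset.mem_of_mem_erase hw)).ne⟩
  have hPu_anticomm : AnticommuteAt Pu (X' v * Q) ψ :=
    hPu ▸ (show AnticommuteAt (X' v) (Z' v) ψ from hv).symm.mul_mul
      (Finset.noncommProd_commute _ _ _ _ fun w hw => hZZ v w (hR_ne hw)).symm
      (Finset.noncommProd_commute _ _ _ _ fun w hw => hXZ v w (hR_ne hw)).symm
      (Finset.noncommProd_commute _ _ _ _ fun w hw => hZZ v w (hQ_ne hw).2).symm
      (Finset.noncommProd_commute _ _ _ _ fun w hw => hXZ v w (hQ_ne hw).2).symm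
      (Finset.noncommProd_commute_noncommProd _ _ _ hZZ _ _)
  exact anticommuteAt_of_stabilized (hX2 u) (hZ2 u) hSu hSv
    (Finset.noncommProd_commute _ _ _ _ fun w hw =>
      hZZ u w ((G.mem_neighborFinset u w).1 hw).ne)
    (hXZ v u huv.ne').symm (hXX u v huv.ne)
    (Finset.noncommProd_commute _ _ _ _ fun w hw => hXZ u w (hQ_ne hw).1) hPu_anticomm

/-- Anticommutativity of the local observables on the state propagates along an
edge of the graph: if `S'_u ψ = S'_v ψ = ψ` and `X'_v Z'_v ψ = -Z'_v X'_v ψ`, then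
`X'_u Z'_u ψ = -Z'_u X'_u ψ`. -/
theorem anticommute_propagates {V : Type*} [Fintype V] [DecidableEq V]
    {H : Type*} [NormedAddCommGroup H] [InnerProductSpace ℂ H] [CompleteSpace H]
    (G : SimpleGraph V) [DecidableRel G.Adj]
    (X' Z' : V → (H →L[ℂ] H))
    (hXsa : ∀ w, IsSelfAdjoint (X' w)) (hZsa : ∀ w, IsSelfAdjoint (Z' w))
    (hX2 : ∀ w, X' w * X' w = 1) (hZ2 : ∀ w, Z' w * Z' w = 1)
    (hXX : ∀ a b, a ≠ b → Commute (X' a) (X' b))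
    (hXZ : ∀ a b, a ≠ b → Commute (X' a) (Z' b))
    (hZZ : ∀ a b, a ≠ b → Commute (Z' a) (Z' b))
    (u v : V) (huv : G.Adj u v) (ψ : H) (hψ : ‖ψ‖ = 1)
    (hSu : (X' u * (G.neighborFinset u).noncommProd Z'
      (fun a _ b _ hab => hZZ a b hab)) ψ = ψ)
    (hSv : (X' v * (G.neighborFinset v).noncommProd Z'
      (fun a _ b _ hab => hZZ a b hab)) ψ = ψ)
    (hv : (X' v * Z' v) ψ = -((Z' v * X' v) ψ)) :
    (X' u * Z' u) ψ = -((Z' u * X' u) ψ) :=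
  anticommute_propagates_general G X' Z' hX2 hZ2 hXX hXZ hZZ u v huv ψ hSu hSv hv
end

section
/- Let X'_u, Z'_u, D'_u, X'_v, Z'_v and Z'_w be self-adjoint involutions on a tensor-product Hilbert space (operators on distinct tensor factors commute), (u,v) an edge of a graph G, and |ψ'⟩ a unit vector satisfying: S'_u|ψ'⟩ = S'_v|ψ'⟩ = |ψ'⟩; ⟨ψ'|Z'_u Z'^{N_u}|ψ'⟩ = 0; ⟨ψ'|D'_u Z'^{N_u}|ψ'⟩ = 1/√2; and ⟨ψ'|D'_u X'_v Z'^{N_v∖{u}}|ψ'⟩ = 1/√2. Then X'_u Z'_u |ψ'⟩ = -Z'_u X'_u |ψ'⟩. -/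
/-!
The stabilizer conditions turn `X'_u ψ` into `Z'^{N_u} ψ` and `Z'_u ψ` into
`X'_v Z'^{N_v∖{u}} ψ`, so the three expectation values say that `X'_u ψ`, `Z'_u ψ` are
orthonormal and that the unit vector `D'_u ψ` has overlap `1/√2` with each of them. By the
equality case of Bessel's inequality, `D'_u ψ = (X'_u ψ + Z'_u ψ)/√2`. Since `D'_u` commutes with
`P = Z'^{N_u}` and `Q = X'_v Z'^{N_v∖{u}}`, expanding `ψ = D'_u² ψ` gives
`ψ = ψ + (PQ + QP)ψ / 2`, and `PQψ + QPψ = Z'_u X'_u ψ + X'_u Z'_u ψ`.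
-/

open Finset

theorem Finset.noncommProd_mul_self_eq_one {ι M : Type*} [Monoid M] (s : Finset ι) (f : ι → M)
    (comm : (s : Set ι).Pairwise fun i j => Commute (f i) (f j))
    (hf : ∀ i ∈ s, f i * f i = 1) :
    s.noncommProd f comm * s.noncommProd f comm = 1 := by
  rw [← noncommProd_mul_distrib f f comm comm comm]
  exact (noncommProd_eq_pow_card _ _ _ 1 hf).trans (one_pow _)

theorem smul_eq_smul_of_mul_smul_eq_self {A M : Type*} [Monoid A] [MulAction A M] {T S : A}
    {ψ : M} (hT : T * T = 1) (h : (T * S) • ψ = ψ) : S • ψ = T • ψ := by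
  calc S • ψ = T • (T * S) • ψ := by rw [smul_smul, ← mul_assoc, hT, one_mul]
    _ = T • ψ := by rw [h]

theorem smul_smul_add_smul_smul_eq_zero_of_smul_eq {R A M : Type*} [CommSemiring R] [Monoid A]
    [AddCommGroup M] [Module R M] [DistribMulAction A M] [SMulCommClass A R M]
    {D P Q : A} {ψ : M} {c : R} (hD : D * D = 1) (hP : P * P = 1) (hQ : Q * Q = 1)
    (hDP : Commute D P) (hDQ : Commute D Q) (hc : 2 * c * c = 1)
    (hψ : D • ψ = c • P • ψ + c • Q • ψ) :
    P • Q • ψ + Q • P • ψ = 0 := by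
  have hDPψ : D • P • ψ = c • ψ + c • P • Q • ψ := by
    rw [smul_smul, hDP.eq, mul_smul, hψ, smul_add, smul_comm P c, smul_comm P c, smul_smul, hP,
      one_smul]
  have hDQψ : D • Q • ψ = c • Q • P • ψ + c • ψ := by
    rw [smul_smul, hDQ.eq, mul_smul, hψ, smul_add, smul_comm Q c, smul_comm Q c, smul_smul Q Q, hQ,
      one_smul]
  have hψψ : ψ = ψ + (c * c) • (P • Q • ψ + Q • P • ψ) := by
    calc ψ = (D * D) • ψ := by rw [hD, one_smul]
      _ = (2 * c * c) • ψ + (c * c) • (P • Q • ψ + Q • P • ψ) := by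
        rw [mul_smul, hψ, smul_add, smul_comm D c, smul_comm D c, hDPψ, hDQψ]
        generalize P • Q • ψ = x
        generalize Q • P • ψ = y
        module
      _ = ψ + (c * c) • (P • Q • ψ + Q • P • ψ) := by rw [hc, one_smul]
  calc P • Q • ψ + Q • P • ψ = (2 * c * c) • (P • Q • ψ + Q • P • ψ) := by rw [hc, one_smul]
    _ = 0 := by rw [mul_assoc, mul_smul, left_eq_add.mp hψψ, smul_zero]

theorem eq_inner_smul_add_inner_smul_of_norm_sq_eq {𝕜 E : Type*} [RCLike 𝕜]
    [NormedAddCommGroup E] [InnerProductSpace 𝕜 E] {a b d : E} (ha : ‖a‖ = 1) (hb : ‖b‖ = 1)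
    (hab : inner 𝕜 a b = 0) (hd : ‖d‖ ^ 2 = ‖inner 𝕜 a d‖ ^ 2 + ‖inner 𝕜 b d‖ ^ 2) :
    d = inner 𝕜 a d • a + inner 𝕜 b d • b := by
  set α := inner 𝕜 a d
  set β := inner 𝕜 b d
  have haa : inner 𝕜 a a = (1 : 𝕜) := by simp [ha]
  have hbb : inner 𝕜 b b = (1 : 𝕜) := by simp [hb]
  have hba : inner 𝕜 b a = 0 := inner_eq_zero_symm.mp hab
  have hp : ‖α • a + β • b‖ ^ 2 = ‖α‖ ^ 2 + ‖β‖ ^ 2 := by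
    have hperp : inner 𝕜 (α • a) (β • b) = 0 := by simp [inner_smul_left, inner_smul_right, hab]
    rw [sq, norm_add_sq_eq_norm_sq_add_norm_sq_of_inner_eq_zero _ _ hperp, norm_smul, norm_smul,
      ha, hb]
    ring
  have hpe : inner 𝕜 (α • a + β • b) (d - (α • a + β • b)) = 0 := by
    simp only [inner_add_left, inner_smul_left, inner_sub_right, inner_add_right,
      inner_smul_right, haa, hbb, hab, hba]
    ring
  have hpyth := norm_add_sq_eq_norm_sq_add_norm_sq_of_inner_eq_zero _ _ hpe
  rwa [add_sub_cancel, ← sq, ← sq, ← sq, hp, hd, left_eq_add, pow_eq_zero_iff two_ne_zero,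
    norm_sub_eq_zero_iff] at hpyth

section SelfAdjoint

variable {𝕜 H : Type*} [RCLike 𝕜] [NormedAddCommGroup H] [InnerProductSpace 𝕜 H]
  [CompleteSpace H] {T : H →L[𝕜] H}

theorem IsSelfAdjoint.inner_apply_left (hT : IsSelfAdjoint T) (x y : H) :
    inner 𝕜 (T x) y = inner 𝕜 x (T y) :=
  hT.isSymmetric x y

theorem IsSelfAdjoint.norm_apply_of_mul_self_eq_one (hT : IsSelfAdjoint T) (hT2 : T * T = 1)
    (x : H) : ‖T x‖ = ‖x‖ :=
  T.norm_map_of_mem_unitary (Unitary.mem_iff.mpr (by rw [hT.star_eq]; exact ⟨hT2, hT2⟩)) x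

end SelfAdjoint

section SelfAdjointInvolution

variable {H : Type*} [NormedAddCommGroup H] [InnerProductSpace ℂ H] [CompleteSpace H]

theorem apply_eq_inv_sqrt_two_smul_add {X Z D P Q : H →L[ℂ] H} {ψ : H}
    (hX : IsSelfAdjoint X) (hZ : IsSelfAdjoint Z) (hD : IsSelfAdjoint D)
    (hX2 : X * X = 1) (hZ2 : Z * Z = 1) (hD2 : D * D = 1) (hψ : ‖ψ‖ = 1)
    (hPψ : P ψ = X ψ) (hQψ : Q ψ = Z ψ) (hZP : inner ℂ ψ ((Z * P) ψ) = 0)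
    (hDP : inner ℂ ψ ((D * P) ψ) = (Real.sqrt 2 : ℂ)⁻¹)
    (hDQ : inner ℂ ψ ((D * Q) ψ) = (Real.sqrt 2 : ℂ)⁻¹) :
    D ψ = (Real.sqrt 2 : ℂ)⁻¹ • X ψ + (Real.sqrt 2 : ℂ)⁻¹ • Z ψ := by
  set c : ℂ := (Real.sqrt 2 : ℂ)⁻¹
  have hconj : starRingEnd ℂ c = c := by simp [c]
  have hXZ : inner ℂ (X ψ) (Z ψ) = 0 := by
    rw [inner_eq_zero_symm, ← hPψ, hZ.inner_apply_left]; exact hZP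
  have hXD : inner ℂ (X ψ) (D ψ) = c := by
    rw [← hPψ, ← inner_conj_symm, (hD.inner_apply_left ψ (P ψ)).trans hDP, hconj]
  have hZD : inner ℂ (Z ψ) (D ψ) = c := by
    rw [← hQψ, ← inner_conj_symm, (hD.inner_apply_left ψ (Q ψ)).trans hDQ, hconj]
  have hnorm : ‖D ψ‖ ^ 2 = ‖c‖ ^ 2 + ‖c‖ ^ 2 := by
    rw [hD.norm_apply_of_mul_self_eq_one hD2, hψ]; norm_num [c]
  have hBessel := eq_inner_smul_add_inner_smul_of_norm_sq_eq
    ((hX.norm_apply_of_mul_self_eq_one hX2 ψ).trans hψ)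
    ((hZ.norm_apply_of_mul_self_eq_one hZ2 ψ).trans hψ) hXZ (by rwa [hXD, hZD])
  rwa [hXD, hZD] at hBessel

theorem anticommute_apply_of_inner_eq_inv_sqrt_two {X Z D P Q : H →L[ℂ] H} {ψ : H}
    (hX : IsSelfAdjoint X) (hZ : IsSelfAdjoint Z) (hD : IsSelfAdjoint D)
    (hX2 : X * X = 1) (hZ2 : Z * Z = 1) (hD2 : D * D = 1) (hP2 : P * P = 1) (hQ2 : Q * Q = 1)
    (hXQ : Commute X Q) (hZP : Commute Z P) (hDP : Commute D P) (hDQ : Commute D Q)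
    (hψ : ‖ψ‖ = 1) (hXPψ : (X * P) ψ = ψ) (hZQψ : (Z * Q) ψ = ψ)
    (hZPexp : inner ℂ ψ ((Z * P) ψ) = 0)
    (hDPexp : inner ℂ ψ ((D * P) ψ) = (Real.sqrt 2 : ℂ)⁻¹)
    (hDQexp : inner ℂ ψ ((D * Q) ψ) = (Real.sqrt 2 : ℂ)⁻¹) :
    (X * Z) ψ = -((Z * X) ψ) := by
  have hPψ : P ψ = X ψ := smul_eq_smul_of_mul_smul_eq_self hX2 hXPψ
  have hQψ : Q ψ = Z ψ := smul_eq_smul_of_mul_smul_eq_self hZ2 hZQψ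
  have hDψ : D ψ = _ := apply_eq_inv_sqrt_two_smul_add hX hZ hD hX2 hZ2 hD2 hψ hPψ hQψ
    hZPexp hDPexp hDQexp
  have hc : 2 * (Real.sqrt 2 : ℂ)⁻¹ * (Real.sqrt 2 : ℂ)⁻¹ = 1 := by
    rw [mul_assoc, ← mul_inv, ← Complex.ofReal_mul, Real.mul_self_sqrt zero_le_two]
    norm_num
  have hanti : P (Q ψ) + Q (P ψ) = 0 :=
    smul_smul_add_smul_smul_eq_zero_of_smul_eq hD2 hP2 hQ2 hDP hDQ hc
      (by rw [← hPψ, ← hQψ] at hDψ; exact hDψ)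
  have hPQ : P (Q ψ) = Z (X ψ) := by rw [hQψ, ← hPψ]; exact DFunLike.congr_fun hZP.eq.symm ψ
  have hQP : Q (P ψ) = X (Z ψ) := by rw [hPψ, ← hQψ]; exact DFunLike.congr_fun hXQ.eq.symm ψ
  rw [hPQ, hQP, add_comm] at hanti
  exact eq_neg_of_add_eq_zero_left hanti

end SelfAdjointInvolution

/-- If `S'_u ψ = S'_v ψ = ψ`, `⟨ψ|Z'_u Z'^{N_u}|ψ⟩ = 0`,
`⟨ψ|D'_u Z'^{N_u}|ψ⟩ = 1/√2` and `⟨ψ|D'_u X'_v Z'^{N_v∖{u}}|ψ⟩ = 1/√2`, then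
`X'_u Z'_u ψ = -Z'_u X'_u ψ`. -/
theorem anticommute_of_D_measurements {V : Type*} [Fintype V] [DecidableEq V]
    {H : Type*} [NormedAddCommGroup H] [InnerProductSpace ℂ H] [CompleteSpace H]
    (G : SimpleGraph V) [DecidableRel G.Adj]
    (X' Z' : V → (H →L[ℂ] H)) (D' : H →L[ℂ] H)
    (hXsa : ∀ w, IsSelfAdjoint (X' w)) (hZsa : ∀ w, IsSelfAdjoint (Z' w))
    (hDsa : IsSelfAdjoint D')
    (hX2 : ∀ w, X' w * X' w = 1) (hZ2 : ∀ w, Z' w * Z' w = 1) (hD2 : D' * D' = 1)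
    (hXX : ∀ a b, a ≠ b → Commute (X' a) (X' b))
    (hXZ : ∀ a b, a ≠ b → Commute (X' a) (Z' b))
    (hZZ : ∀ a b, a ≠ b → Commute (Z' a) (Z' b))
    (u v : V) (huv : G.Adj u v)
    (hDX : ∀ w, w ≠ u → Commute (D') (X' w))
    (hDZ : ∀ w, w ≠ u → Commute (D') (Z' w))
    (ψ : H) (hψ : ‖ψ‖ = 1)
    (hSu : (X' u * (G.neighborFinset u).noncommProd Z'
      (fun a _ b _ hab => hZZ a b hab)) ψ = ψ)
    (hSv : (X' v * (G.neighborFinset v).noncommProd Z'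
      (fun a _ b _ hab => hZZ a b hab)) ψ = ψ)
    (hZZexp : (inner ℂ ψ ((Z' u * (G.neighborFinset u).noncommProd Z'
      (fun a _ b _ hab => hZZ a b hab)) ψ) : ℂ) = 0)
    (hDZexp : (inner ℂ ψ ((D' * (G.neighborFinset u).noncommProd Z'
      (fun a _ b _ hab => hZZ a b hab)) ψ) : ℂ) = (Real.sqrt 2 : ℂ)⁻¹)
    (hDXZexp : (inner ℂ ψ ((D' * (X' v * ((G.neighborFinset v).erase u).noncommProd Z'
      (fun a _ b _ hab => hZZ a b hab))) ψ) : ℂ) = (Real.sqrt 2 : ℂ)⁻¹) :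
    (X' u * Z' u) ψ = -((Z' u * X' u) ψ) := by
  set Nu := (G.neighborFinset u).noncommProd Z' (fun a _ b _ hab => hZZ a b hab)
  set Nvu := ((G.neighborFinset v).erase u).noncommProd Z' (fun a _ b _ hab => hZZ a b hab)
  have hvu : v ≠ u := huv.ne'
  have hNu : ∀ w ∈ G.neighborFinset u, w ≠ u := fun w hw => ne_of_mem_of_not_mem hw (by simp)
  have hNvu : ∀ w ∈ (G.neighborFinset v).erase u, w ≠ u := fun w hw => ne_of_mem_erase hw
  have hNv : (G.neighborFinset v).noncommProd Z' (fun a _ b _ hab => hZZ a b hab) =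
      Z' u * Nvu :=
    (mul_noncommProd_erase _ ((G.mem_neighborFinset v u).mpr huv.symm) _ _).symm
  have hQ2 : (X' v * Nvu) * (X' v * Nvu) = 1 := by
    have hNvuXv : Commute Nvu (X' v) := (noncommProd_commute _ _ _ _ fun w hw =>
      hXZ v w (ne_of_mem_of_not_mem (mem_of_mem_erase hw) (by simp)).symm).symm
    rw [hNvuXv.mul_mul_mul_comm, hX2, one_mul]
    exact noncommProd_mul_self_eq_one _ _ _ fun w _ => hZ2 w
  exact anticommute_apply_of_inner_eq_inv_sqrt_two (hXsa u) (hZsa u) hDsa (hX2 u) (hZ2 u) hD2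
    (noncommProd_mul_self_eq_one _ _ _ fun w _ => hZ2 w) hQ2
    ((hXX u v huv.ne).mul_right (noncommProd_commute _ _ _ _ fun w hw => hXZ u w (hNvu w hw).symm))
    (noncommProd_commute _ _ _ _ fun w hw => hZZ u w (hNu w hw).symm)
    (noncommProd_commute _ _ _ _ fun w hw => hDZ w (hNu w hw))
    ((hDX v hvu).mul_right (noncommProd_commute _ _ _ _ fun w hw => hDZ w (hNvu w hw)))
    hψ hSu (by rwa [hNv, (hXZ v u hvu).left_comm] at hSv) hZZexp hDZexp hDXZexp
end

section
/- There is a local hidden variable model reproducing all tensor-product X/Z measurement correlations on a bipartite graph state: assign independent uniform ±1 values z_v to each vertex and set x_v = ∏_{u∈N_v} z_u; then for every M = X^S Z^T with S,T disjoint, the expectation of ∏_{v∈S} x_v · ∏_{v∈T} z_v over the random assignment equals ⟨ψ|M|ψ⟩. -/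
open scoped Matrix

/-- A graph is bipartite if its vertex set can be partitioned into two parts,
each containing no edge. -/
def SimpleGraph.IsBipartite' {V : Type*} (G : SimpleGraph V) : Prop :=
  ∃ A : Set V, ∀ ⦃u v : V⦄, G.Adj u v → (u ∈ A ↔ v ∉ A)

set_option linter.unusedSectionVars false
set_option maxHeartbeats 1000000
namespace LHVAux
open Finset
open scoped Classical
variable {V : Type*} [Fintype V] [DecidableEq V] (G : SimpleGraph V) [DecidableRel G.Adj]

lemma edgeCountOn_def (x : V → Bool) :
    edgeCountOn G x = (G.edgeFinset.filter fun e => ∀ v ∈ e, x v = true).card := by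
  unfold edgeCountOn; congr!

lemma prod_ite_neg (A : Finset V) (y : V → Bool) :
    (∏ u ∈ A, (if y u then (-1:ℂ) else 1)) = (-1)^((A.filter fun u => y u = true).card) := by
  rw [Finset.prod_ite, Finset.prod_const, Finset.prod_const, one_pow, mul_one]

lemma edgeCountOn_eq_zero (x : V → Bool) (hx : ∀ u w, G.Adj u w → ¬(x u = true ∧ x w = true)) :
    edgeCountOn G x = 0 := by
  rw [edgeCountOn_def, Finset.card_eq_zero, Finset.filter_eq_empty_iff]
  intro e he
  induction e with
  | _ u w =>
    rw [SimpleGraph.mem_edgeFinset, SimpleGraph.mem_edgeSet] at he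
    intro h
    exact hx u w he ⟨h u (Sym2.mem_mk_left u w), h w (Sym2.mem_mk_right u w)⟩

lemma filter_not_mem_congr (y y' : V → Bool) (v : V) (h : ∀ u, u ≠ v → y u = y' u) :
    ((G.edgeFinset.filter fun e => ∀ w ∈ e, y w = true).filter fun e => v ∉ e) =
    ((G.edgeFinset.filter fun e => ∀ w ∈ e, y' w = true).filter fun e => v ∉ e) := by
  ext e
  simp only [Finset.mem_filter]
  constructor <;> rintro ⟨⟨he, hall⟩, hv⟩ <;> refine ⟨⟨he, fun w hw => ?_⟩, hv⟩
  · rw [← h w (fun hwv => hv (hwv ▸ hw))]; exact hall w hw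
  · rw [h w (fun hwv => hv (hwv ▸ hw))]; exact hall w hw

lemma filter_mem_card (y : V → Bool) (v : V) :
    ((G.edgeFinset.filter fun e => ∀ w ∈ e, y w = true).filter fun e => v ∈ e).card =
    if y v = true then ((G.neighborFinset v).filter fun u => y u = true).card else 0 := by
  by_cases hv : y v = true
  · rw [if_pos hv]
    have himg : ((G.edgeFinset.filter fun e => ∀ w ∈ e, y w = true).filter fun e => v ∈ e) =
        ((G.neighborFinset v).filter fun u => y u = true).image (fun u => s(v, u)) := by
      ext e
      simp only [Finset.mem_filter, Finset.mem_image, SimpleGraph.mem_edgeFinset,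
        SimpleGraph.mem_neighborFinset]
      constructor
      · rintro ⟨⟨he, hall⟩, hve⟩
        obtain ⟨u, rfl⟩ := Sym2.mem_iff_exists.mp hve
        exact ⟨u, ⟨G.mem_edgeSet.mp he, hall u (Sym2.mem_mk_right v u)⟩, rfl⟩
      · rintro ⟨u, ⟨hadj, hyu⟩, rfl⟩
        refine ⟨⟨G.mem_edgeSet.mpr hadj, fun w hw => ?_⟩, Sym2.mem_mk_left v u⟩
        rcases Sym2.mem_iff.mp hw with rfl | rfl
        · exact hv
        · exact hyu
    rw [himg, Finset.card_image_of_injective _ fun a b hab => Sym2.congr_right.mp hab]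
  · rw [if_neg hv, Finset.card_eq_zero, Finset.filter_eq_empty_iff]
    rintro e he hv'
    rw [Finset.mem_filter] at he
    exact hv (he.2 v hv')

/-- flip lemma -/
lemma neg_pow_edgeCountOn_flip (y : V → Bool) (v : V) :
    (-1:ℂ) ^ edgeCountOn G (fun u => xor (y u) (decide (u = v))) =
    (-1:ℂ) ^ edgeCountOn G y *
      ∏ u ∈ G.neighborFinset v, (if y u then (-1:ℂ) else 1) := by
  set y' : V → Bool := fun u => xor (y u) (decide (u = v)) with hy'
  have hyy' : ∀ u, u ≠ v → y' u = y u := by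
    intro u hu; simp [hy', hu]
  have split : ∀ z : V → Bool, edgeCountOn G z =
      ((G.edgeFinset.filter fun e => ∀ w ∈ e, z w = true).filter fun e => v ∈ e).card +
      ((G.edgeFinset.filter fun e => ∀ w ∈ e, z w = true).filter fun e => v ∉ e).card := by
    intro z
    rw [edgeCountOn_def, ← Finset.card_filter_add_card_filter_not (fun e => v ∈ e)]
  have hnb : ∀ u ∈ G.neighborFinset v, y' u = y u := by
    intro u hu
    exact hyy' u (G.ne_of_adj (G.mem_neighborFinset v u |>.mp hu)).symm ▸ rfl
  have hk : ((G.neighborFinset v).filter fun u => y' u = true).card =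
      ((G.neighborFinset v).filter fun u => y u = true).card := by
    congr 1
    apply Finset.filter_congr
    intro u hu
    rw [hnb u hu]
  have hc2 := filter_not_mem_congr G y' y v hyy'
  rw [split y', split y, hc2, filter_mem_card, filter_mem_card, hk, prod_ite_neg]
  set k := ((G.neighborFinset v).filter fun u => y u = true).card
  set c2 := ((G.edgeFinset.filter fun e => ∀ w ∈ e, y w = true).filter fun e => v ∉ e).card
  have hv' : y' v = !(y v) := by simp [hy']
  by_cases hv : y v = true
  · rw [hv'] at *
    rw [hv]
    simp only [hv, Bool.not_true, if_pos, if_neg (by simp : ¬(false = true))]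
    rw [zero_add, pow_add, mul_comm ((-1:ℂ)^k), mul_assoc, ← pow_add, ← two_mul, pow_mul]
    norm_num
  · have hvf : y v = false := by simpa using hv
    rw [hv']
    simp only [hvf, Bool.not_false, if_pos, if_neg (by simp : ¬(false = true))]
    ring

lemma neg_pow_edgeCountOn_xor (S : Finset V) (x : V → Bool) :
    (-1:ℂ) ^ edgeCountOn G (fun u => xor (x u) (decide (u ∈ S))) =
    (-1:ℂ) ^ edgeCountOn G x *
    (-1:ℂ) ^ edgeCountOn G (fun u => decide (u ∈ S)) *
      ∏ v ∈ S, ∏ u ∈ G.neighborFinset v, (if x u then (-1:ℂ) else 1) := by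
  induction S using Finset.induction_on generalizing x with
  | empty =>
    have h1 : (fun u => xor (x u) (decide (u ∈ (∅ : Finset V)))) = x := by
      funext u; simp
    have h2 : edgeCountOn G (fun u => decide (u ∈ (∅ : Finset V))) = 0 := by
      apply edgeCountOn_eq_zero
      intro u w _ h
      simpa using h.1
    rw [h1, h2]
    simp
  | @insert v S' hvS' ih =>
    have hx1 : (fun u => xor (x u) (decide (u ∈ insert v S'))) =
        (fun u => xor ((fun w => xor (x w) (decide (w ∈ S'))) u) (decide (u = v))) := by
      funext u
      by_cases h : u = v
      · subst h; simp [hvS']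
      · simp [Finset.mem_insert, h]
    have hx2 : (fun u => decide (u ∈ insert v S')) =
        (fun u => xor ((fun w => decide (w ∈ S')) u) (decide (u = v))) := by
      funext u
      by_cases h : u = v
      · subst h; simp [hvS']
      · simp [Finset.mem_insert, h]
    rw [hx1, neg_pow_edgeCountOn_flip, ih, hx2, neg_pow_edgeCountOn_flip,
      Finset.prod_insert hvS']
    have hsplit : ∀ u ∈ G.neighborFinset v,
        (if xor (x u) (decide (u ∈ S')) = true then (-1:ℂ) else 1) =
        (if x u then (-1:ℂ) else 1) * (if decide (u ∈ S') = true then (-1:ℂ) else 1) := by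
      intro u _
      cases hxu : x u <;> by_cases h : u ∈ S' <;> simp [h, hxu]
    rw [Finset.prod_congr rfl hsplit, Finset.prod_mul_distrib]
    ring

lemma neg_one_pow_ite (b : Bool) (n : ℕ) :
    ((if b then (-1:ℂ) else 1)) ^ n = if Odd n then (if b then (-1:ℂ) else 1) else 1 := by
  cases b <;> rcases Nat.even_or_odd n with h | h <;>
    simp [h, h.neg_one_pow, Nat.not_odd_iff_even.mpr, Nat.not_even_iff_odd.mpr]

lemma prod_swap_neighbors (S : Finset V) (f : V → ℂ) :
    (∏ v ∈ S, ∏ u ∈ G.neighborFinset v, f u) =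
    ∏ u : V, f u ^ ((G.neighborFinset u).filter fun w => w ∈ S).card := by
  have h1 : ∀ v, (∏ u ∈ G.neighborFinset v, f u) =
      ∏ u : V, if G.Adj v u then f u else 1 := by
    intro v
    rw [SimpleGraph.neighborFinset_eq_filter, Finset.prod_filter]
  simp_rw [h1]
  rw [Finset.prod_comm]
  refine Finset.prod_congr rfl fun u _ => ?_
  rw [← Finset.prod_filter, Finset.prod_const]
  congr 1
  congr 1
  ext v
  simp only [Finset.mem_filter, SimpleGraph.mem_neighborFinset]
  rw [G.adj_comm]
  tauto

lemma integrand_eq (S T : Finset V) (x : V → Bool) :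
    (∏ v ∈ S, ∏ u ∈ G.neighborFinset v, (if x u then (-1:ℂ) else 1)) *
      (∏ v ∈ T, (if x v then (-1:ℂ) else 1)) =
    ∏ u ∈ Finset.univ.filter (fun u =>
        Xor' (Odd ((G.neighborFinset u).filter fun w => w ∈ S).card) (u ∈ T)),
      (if x u then (-1:ℂ) else 1) := by
  rw [prod_swap_neighbors]
  have hT : (∏ v ∈ T, (if x v then (-1:ℂ) else 1)) =
      ∏ u : V, if u ∈ T then (if x u then (-1:ℂ) else 1) else 1 := by
    rw [Finset.prod_ite_mem, Finset.univ_inter]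
  rw [hT, ← Finset.prod_mul_distrib, Finset.prod_filter]
  refine Finset.prod_congr rfl fun u _ => ?_
  rw [neg_one_pow_ite]
  by_cases ho : Odd ((G.neighborFinset u).filter fun w => w ∈ S).card <;>
    by_cases ht : u ∈ T <;> cases hx : x u <;>
    simp [ho, ht, hx, Xor']

lemma sum_prod_ite_zero (D : Finset V) (hD : D.Nonempty) :
    ∑ x : V → Bool, ∏ u ∈ D, (if x u then (-1:ℂ) else 1) = 0 := by
  obtain ⟨w, hw⟩ := hD
  set φ : (V → Bool) → (V → Bool) := fun x u => xor (x u) (decide (u = w)) with hφ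
  have hinv : Function.Involutive φ := by
    intro x; funext u; by_cases h : u = w <;> simp [hφ, h]
  have hflip : ∀ x : V → Bool, (∏ u ∈ D, (if (φ x) u then (-1:ℂ) else 1)) =
      - ∏ u ∈ D, (if x u then (-1:ℂ) else 1) := by
    intro x
    rw [← Finset.mul_prod_erase _ _ hw, ← Finset.mul_prod_erase _ (fun u => if x u then (-1:ℂ) else 1) hw]
    have h1 : (if (φ x) w then (-1:ℂ) else 1) = - (if x w then (-1:ℂ) else 1) := by
      cases h : x w <;> simp [hφ, h]
    have h2 : ∀ u ∈ D.erase w, (if (φ x) u then (-1:ℂ) else 1) = (if x u then (-1:ℂ) else 1) := by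
      intro u hu
      have : u ≠ w := Finset.ne_of_mem_erase hu
      simp [hφ, this]
    rw [Finset.prod_congr rfl h2, h1]
    ring
  have hsum : ∑ x : V → Bool, ∏ u ∈ D, (if x u then (-1:ℂ) else 1) =
      ∑ x : V → Bool, ∏ u ∈ D, (if (φ x) u then (-1:ℂ) else 1) :=
    (Fintype.sum_bijective φ hinv.bijective _ _ fun x => rfl).symm
  have h0 : ∑ x : V → Bool, ∏ u ∈ D, (if x u then (-1:ℂ) else 1) =
      - ∑ x : V → Bool, ∏ u ∈ D, (if x u then (-1:ℂ) else 1) := by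
    conv_lhs => rw [hsum]
    rw [← Finset.sum_neg_distrib]
    exact Finset.sum_congr rfl fun x _ => hflip x
  have h2 : (2:ℂ) * ∑ x : V → Bool, ∏ u ∈ D, (if x u then (-1:ℂ) else 1) = 0 := by
    linear_combination h0
  simpa using h2

lemma neg_one_pow_chi (hbip : ∃ A : Set V, ∀ ⦃u v : V⦄, G.Adj u v → (u ∈ A ↔ v ∉ A))
    (S : Finset V)
    (heven : ∀ v ∈ S, ¬ Odd ((G.neighborFinset v).filter fun w => w ∈ S).card) :
    (-1:ℂ) ^ edgeCountOn G (fun u => decide (u ∈ S)) = 1 := by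
  obtain ⟨Ab, hAb⟩ := hbip
  set S1 := S.filter (fun v => v ∈ Ab) with hS1
  set S0 := S.filter (fun v => v ∉ Ab) with hS0
  have hx : (fun u => decide (u ∈ S)) =
      (fun u => xor ((fun w => decide (w ∈ S0)) u) (decide (u ∈ S1))) := by
    funext u
    by_cases hS : u ∈ S <;> by_cases hA : u ∈ Ab <;> simp [hS0, hS1, hS, hA]
  rw [hx, neg_pow_edgeCountOn_xor]
  have h0 : edgeCountOn G (fun u => decide (u ∈ S0)) = 0 := by
    apply edgeCountOn_eq_zero
    intro u w hadj ⟨h1, h2⟩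
    simp only [hS0, decide_eq_true_eq, Finset.mem_filter] at h1 h2
    exact h1.2 ((hAb hadj).mpr h2.2)
  have h1 : edgeCountOn G (fun u => decide (u ∈ S1)) = 0 := by
    apply edgeCountOn_eq_zero
    intro u w hadj ⟨h1, h2⟩
    simp only [hS1, decide_eq_true_eq, Finset.mem_filter] at h1 h2
    exact ((hAb hadj).mp h1.2) h2.2
  have hprod : ∀ v ∈ S1, (∏ u ∈ G.neighborFinset v,
      (if (decide (u ∈ S0)) then (-1:ℂ) else 1)) = 1 := by
    intro v hv
    rw [prod_ite_neg]
    have hfil : ((G.neighborFinset v).filter fun u => (decide (u ∈ S0)) = true) =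
        ((G.neighborFinset v).filter fun w => w ∈ S) := by
      ext u
      simp only [Finset.mem_filter, decide_eq_true_eq, hS0, SimpleGraph.mem_neighborFinset]
      have hvA : v ∈ Ab := (Finset.mem_filter.mp hv).2
      constructor
      · rintro ⟨ha, hu, _⟩; exact ⟨ha, hu⟩
      · rintro ⟨ha, hu⟩; exact ⟨ha, hu, (hAb ha).mp hvA⟩
    rw [hfil]
    have := heven v (Finset.mem_filter.mp hv).1
    rw [Nat.not_odd_iff_even] at this
    exact this.neg_one_pow
  rw [h0, h1, Finset.prod_congr rfl hprod]
  simp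

lemma rhs_eval (S T : Finset V) :
    star (graphState G) ⬝ᵥ ((XOp S * ZOp T) *ᵥ graphState G) =
    (1 / 2 ^ Fintype.card V : ℂ) * ∑ x : V → Bool,
      (-1:ℂ) ^ edgeCountOn G x *
      (-1:ℂ) ^ edgeCountOn G (fun v => xor (x v) (decide (v ∈ S))) *
      (-1:ℂ) ^ (T.filter fun v => (xor (x v) (decide (v ∈ S))) = true).card := by
  have hmul : ∀ x : V → Bool, ((XOp S * ZOp T) *ᵥ graphState G) x =
      (-1:ℂ) ^ (T.filter fun v => (xor (x v) (decide (v ∈ S))) = true).card *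
        graphState G (fun v => xor (x v) (decide (v ∈ S))) := by
    intro x
    rw [Matrix.mulVec]
    simp only [Matrix.mul_diagonal, XOp, ZOp, dotProduct, ite_mul, one_mul, zero_mul]
    rw [Finset.sum_ite_eq' Finset.univ (fun v => xor (x v) (decide (v ∈ S)))]
    simp [mul_comm]
  have hstar : ∀ x : V → Bool, star (graphState G) x = graphState G x := by
    intro x
    simp [graphState, Complex.ext_iff]
  rw [dotProduct]
  rw [Finset.mul_sum]
  refine Finset.sum_congr rfl fun x _ => ?_
  rw [hmul, hstar]
  simp only [graphState]
  have h2 : ((Real.sqrt (2 ^ Fintype.card V) : ℝ) : ℂ) *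
      ((Real.sqrt (2 ^ Fintype.card V) : ℝ) : ℂ) = (2:ℂ) ^ Fintype.card V := by
    rw [← Complex.ofReal_mul, Real.mul_self_sqrt (by positivity)]
    push_cast
    ring
  have hr : ((Real.sqrt (2 ^ Fintype.card V) : ℝ) : ℂ) ≠ 0 := by
    simp only [ne_eq, Complex.ofReal_eq_zero]
    positivity
  field_simp
  rw [← h2]
  ring

end LHVAux


/-- Local hidden variable model for X/Z measurements on a bipartite graph state:
choosing independent uniform `±1` values `z_v` and setting `x_v = ∏_{u ∈ N_v} z_u`,
the expectation of `∏_{v∈S} x_v ∏_{v∈T} z_v` equals `⟨ψ| X^S Z^T |ψ⟩`. -/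
theorem bipartite_lhv_model {V : Type*} [Fintype V] [DecidableEq V]
    (G : SimpleGraph V) [DecidableRel G.Adj] (hbip : G.IsBipartite')
    (S T : Finset V) (hdisj : Disjoint S T) :
    (1 / 2 ^ Fintype.card V : ℂ) *
        ∑ z : V → Bool,
          (∏ v ∈ S, ∏ u ∈ G.neighborFinset v, (if z u then (-1 : ℂ) else 1)) *
          (∏ v ∈ T, (if z v then (-1 : ℂ) else 1)) =
      star (graphState G) ⬝ᵥ ((XOp S * ZOp T) *ᵥ graphState G) := by
  classical
  rw [LHVAux.rhs_eval]
  have key : ∀ x : V → Bool,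
      (-1:ℂ) ^ edgeCountOn G x *
      (-1:ℂ) ^ edgeCountOn G (fun v => xor (x v) (decide (v ∈ S))) *
      (-1:ℂ) ^ (T.filter fun v => (xor (x v) (decide (v ∈ S))) = true).card
      = (-1:ℂ) ^ edgeCountOn G (fun u => decide (u ∈ S)) *
        ((∏ v ∈ S, ∏ u ∈ G.neighborFinset v, (if x u then (-1:ℂ) else 1)) *
         (∏ v ∈ T, (if x v then (-1:ℂ) else 1))) := by
    intro x
    rw [LHVAux.neg_pow_edgeCountOn_xor]
    have hT : ((-1:ℂ)) ^ (T.filter fun v => (xor (x v) (decide (v ∈ S))) = true).card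
        = ∏ v ∈ T, (if x v then (-1:ℂ) else 1) := by
      rw [LHVAux.prod_ite_neg]
      congr 2
      apply Finset.filter_congr
      intro v hv
      have hvS : v ∉ S := Finset.disjoint_right.mp hdisj hv
      simp [hvS]
    rw [hT]
    have hsq : (-1:ℂ) ^ edgeCountOn G x * (-1:ℂ) ^ edgeCountOn G x = 1 := by
      rw [← pow_add, ← two_mul, pow_mul]; norm_num
    set A := (-1:ℂ) ^ edgeCountOn G x
    set K := (-1:ℂ) ^ edgeCountOn G (fun u => decide (u ∈ S))
    set P := ∏ v ∈ S, ∏ u ∈ G.neighborFinset v, (if x u then (-1:ℂ) else 1)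
    set Q := ∏ v ∈ T, (if x v then (-1:ℂ) else 1)
    have : A * (A * K * P) * Q = (A * A) * (K * (P * Q)) := by ring
    rw [this, hsq, one_mul]
  rw [Finset.sum_congr rfl fun x _ => key x, ← Finset.mul_sum]
  set K := (-1:ℂ) ^ edgeCountOn G (fun u => decide (u ∈ S)) with hK
  set Ssum := ∑ z : V → Bool,
      (∏ v ∈ S, ∏ u ∈ G.neighborFinset v, (if z u then (-1 : ℂ) else 1)) *
      (∏ v ∈ T, (if z v then (-1 : ℂ) else 1)) with hSsum
  have hDval : Ssum = ∑ x : V → Bool, ∏ u ∈ Finset.univ.filter (fun u =>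
      Xor' (Odd ((G.neighborFinset u).filter fun w => w ∈ S).card) (u ∈ T)),
      (if x u then (-1:ℂ) else 1) := by
    rw [hSsum]
    exact Finset.sum_congr rfl fun x _ => LHVAux.integrand_eq G S T x
  rcases Finset.eq_empty_or_nonempty (Finset.univ.filter (fun u =>
      Xor' (Odd ((G.neighborFinset u).filter fun w => w ∈ S).card) (u ∈ T))) with hD | hD
  · have heven : ∀ v ∈ S, ¬ Odd ((G.neighborFinset v).filter fun w => w ∈ S).card := by
      intro v hv ho
      have hvT : v ∉ T := Finset.disjoint_left.mp hdisj hv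
      have := Finset.filter_eq_empty_iff.mp hD (Finset.mem_univ v)
      exact this (Or.inl ⟨ho, hvT⟩)
    have hK1 : K = 1 := LHVAux.neg_one_pow_chi G hbip S heven
    rw [hK1, one_mul]
  · have h0 : Ssum = 0 := by
      rw [hDval, LHVAux.sum_prod_ite_zero _ hD]
    rw [h0]
    ring
end
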